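/- Let G(x,y,p) = Σ_{n,k≥0} Σ_{π ∈ C_{n,k}} x^n y^k p^{sv(π)}, a well-defined formal power series in ℚ[[x,y,p]]. For each integer a ≥ 1 let B_a = 1 − y²·x^{a+1}·(p−1)·(1 + x + ⋯ + x^{a−2}) ∈ ℚ[[x,y,p]] (so B₁ = 1); each B_a has constant term 1 and is invertible. Then G · (1 − Σ_{a≥1} x^a·y·B_a^{−1}) = 1, where the sum over a converges coefficientwise since the a-th summand has x-adic order at least a. Equivalently, G(x,y,p) = 1/(1 − Σ_{a≥1} x^a y/(1 − y²x^{a+1}(x^{a−1}−1)(p−1)/(x−1))). -/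

import Mathlib

/-- The indices (0-based) of symmetric valleys of a list of naturals:
`i` is a symmetric valley if `L i > L (i+1)` and `L i = L (i+2)`. -/
def symValleyIdx (L : List ℕ) : Finset ℕ :=
  (Finset.range L.length).filter (fun i =>
    i + 2 < L.length ∧ L.getD i 0 > L.getD (i+1) 0 ∧ L.getD i 0 = L.getD (i+2) 0)

/-- `sv π`: the number of symmetric valleys of `π`. -/
def svL (L : List ℕ) : ℕ := (symValleyIdx L).card

/-- Variables: `X 0 = x`, `X 1 = y`, `X 2 = p`. -/
noncomputable abbrev Xv : Fin 3 → MvPowerSeries (Fin 3) ℚ := MvPowerSeries.X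

/-- `G(x,y,p) = Σ_{n,k≥0} Σ_{π ∈ C_{n,k}} x^n y^k p^{sv(π)}`, defined coefficientwise. -/
noncomputable def Gsv : MvPowerSeries (Fin 3) ℚ := fun m =>
  ((Finset.univ : Finset (Composition (m 0))).filter (fun c =>
    c.length = m 1 ∧ svL c.blocks = m 2)).card

/-- `B_a = 1 − y²·x^{a+1}·(p−1)·(1 + x + ⋯ + x^{a−2})` (so `B₁ = 1`); this is the
power-series meaning of `1 − y²x^{a+1}(x^{a−1}−1)(p−1)/(x−1)`. -/
noncomputable def Bsv (a : ℕ) : MvPowerSeries (Fin 3) ℚ :=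
  1 - (Xv 1)^2 * (Xv 0)^(a+1) * (Xv 2 - 1) * ∑ j ∈ Finset.range (a - 1), (Xv 0)^j

/-- `Σ_{a≥1} x^a·y·B_a⁻¹`, defined coefficientwise: since the `a`-th summand has `x`-adic
order at least `a`, only the terms with `1 ≤ a ≤ m 0` contribute to the coefficient of a
monomial `m`. -/
noncomputable def Ssv : MvPowerSeries (Fin 3) ℚ := fun m =>
  ∑ a ∈ Finset.Icc 1 (m 0), MvPowerSeries.coeff m ((Xv 0)^a * Xv 1 * (Bsv a)⁻¹)

/-!
For `a ≥ 1` let `GsvAfter a` count compositions `τ` by `x^|τ| y^len(τ) p^sv(a τ)`. Splitting off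
the first part gives `G = 1 + Σ_a x^a y GsvAfter a`. Prepending `a` to `τ` creates one new
symmetric valley exactly when `τ = b a τ'` with `b < a`, and then `sv(b a τ') = sv(a τ')`. Hence
`GsvAfter a = G + (p - 1) Σ_{b<a} x^{a+b} y² GsvAfter a`, i.e. `GsvAfter a · B_a = G`, and
substituting `GsvAfter a = G B_a⁻¹` into the first identity gives `G = 1 + G S`.
-/

open MvPowerSeries Finset

def StartsWithSymValley (L : List ℕ) : Prop := ∃ a b R, b < a ∧ L = a :: b :: a :: R

lemma mem_symValleyIdx {L : List ℕ} {i : ℕ} :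
    i ∈ symValleyIdx L ↔
      i + 2 < L.length ∧ L.getD i 0 > L.getD (i + 1) 0 ∧ L.getD i 0 = L.getD (i + 2) 0 := by
  simp only [symValleyIdx, mem_filter, mem_range]
  exact ⟨And.right, fun h => ⟨by omega, h⟩⟩

lemma zero_mem_symValleyIdx_iff {L : List ℕ} :
    0 ∈ symValleyIdx L ↔ StartsWithSymValley L := by
  rw [mem_symValleyIdx]
  match L with
  | a :: b :: c :: R =>
    simp only [StartsWithSymValley, List.cons.injEq, List.getD_cons_zero, List.getD_cons_succ]
    constructor
    · rintro ⟨-, hb, rfl⟩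
      exact ⟨a, b, R, hb, rfl, rfl, rfl, rfl⟩
    · rintro ⟨a, b, R, hb, rfl, rfl, rfl, rfl⟩
      exact ⟨by simp, hb, rfl⟩
  | [] | [_] | [_, _] => simp [StartsWithSymValley]

lemma symValleyIdx_cons_erase_zero (a : ℕ) (L : List ℕ) :
    (symValleyIdx (a :: L)).erase 0 = (symValleyIdx L).map (addRightEmbedding 1) := by
  ext i
  rcases i with _ | i
  · simp
  · simp only [mem_erase, ne_eq, Nat.add_one_ne_zero, not_false_eq_true, true_and, mem_map,
      mem_symValleyIdx, List.length_cons, List.getD_cons_succ, addRightEmbedding_apply,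
      Nat.add_right_cancel_iff, exists_eq_right]
    omega

lemma svL_nil : svL [] = 0 := rfl

lemma svL_cons_of_startsWithSymValley {a : ℕ} {L : List ℕ} (h : StartsWithSymValley (a :: L)) :
    svL (a :: L) = svL L + 1 := by
  rw [svL, ← card_erase_add_one (zero_mem_symValleyIdx_iff.2 h),
    symValleyIdx_cons_erase_zero, card_map, svL]

lemma svL_cons_of_not_startsWithSymValley {a : ℕ} {L : List ℕ}
    (h : ¬ StartsWithSymValley (a :: L)) : svL (a :: L) = svL L := by
  rw [svL, ← erase_eq_of_notMem (mt zero_mem_symValleyIdx_iff.1 h),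
    symValleyIdx_cons_erase_zero, card_map, svL]

lemma svL_cons_cons_of_lt {a b : ℕ} (R : List ℕ) (h : b < a) : svL (b :: a :: R) = svL (a :: R) :=
  svL_cons_of_not_startsWithSymValley fun ⟨_, _, _, hlt, heq⟩ => by
    simp only [List.cons.injEq] at heq
    omega

section Coeff

variable {σ R : Type*} [CommSemiring R]

lemma coeff_X_mul_eq_ite (i : σ) (f : MvPowerSeries σ R) (m : σ →₀ ℕ) :
    coeff m (X i * f) = if 1 ≤ m i then coeff (m - Finsupp.single i 1) f else 0 := by
  classical
  simp only [X_def, coeff_monomial_mul, one_mul, Finsupp.single_le_iff]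

lemma coeff_X_pow_mul_X_mul_eq_ite {i j : σ} (hij : i ≠ j) (c : ℕ) (f : MvPowerSeries σ R)
    (m : σ →₀ ℕ) :
    coeff m (X i ^ c * X j * f) =
      if c ≤ m i ∧ 1 ≤ m j then coeff (m - (Finsupp.single i c + Finsupp.single j 1)) f
      else 0 := by
  classical
  rw [X_pow_eq, X_def, monomial_mul_monomial, one_mul, coeff_monomial_mul, one_mul]
  congr 1
  refine propext ⟨fun h => ⟨?_, ?_⟩, fun ⟨hi, hj⟩ k => ?_⟩
  · simpa [Finsupp.single_apply, hij.symm] using h i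
  · simpa [Finsupp.single_apply, hij] using h j
  · by_cases hki : i = k <;> by_cases hkj : j = k <;> simp_all

lemma coeff_mul_eq_sum_of_coeff_eq_sum (i : σ)
    {g : ℕ → MvPowerSeries σ R} (hg : ∀ a m, m i < a → coeff m (g a) = 0)
    {S : MvPowerSeries σ R} (hS : ∀ m, coeff m S = ∑ a ∈ Icc 1 (m i), coeff m (g a))
    (f : MvPowerSeries σ R) (m : σ →₀ ℕ) :
    coeff m (f * S) = ∑ a ∈ Icc 1 (m i), coeff m (f * g a) := by
  classical
  simp only [coeff_mul, hS, mul_sum]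
  rw [sum_comm]
  refine sum_congr rfl fun p hp => sum_subset (Icc_subset_Icc_right ?_) fun a ha hna => ?_
  · have := congrArg (· i) (mem_antidiagonal.1 hp)
    simp only [Finsupp.add_apply] at this
    omega
  · rw [hg a p.2 (by simp only [mem_Icc] at ha hna; omega), mul_zero]

end Coeff

def compLists (n : ℕ) : Finset (List ℕ) := univ.image (Composition.blocks (n := n))

lemma mem_compLists {n : ℕ} {L : List ℕ} : L ∈ compLists n ↔ L.sum = n ∧ ∀ x ∈ L, 0 < x := by
  constructor
  · intro h
    obtain ⟨c, -, rfl⟩ := mem_image.1 h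
    exact ⟨c.blocks_sum, fun _ => c.blocks_pos⟩
  · rintro ⟨hsum, hpos⟩
    exact mem_image.2 ⟨⟨L, hpos _, hsum⟩, mem_univ _, rfl⟩

lemma cons_mem_compLists {c n : ℕ} {R : List ℕ} :
    c :: R ∈ compLists n ↔ 0 < c ∧ c ≤ n ∧ R ∈ compLists (n - c) := by
  simp only [mem_compLists, List.sum_cons, List.forall_mem_cons]
  constructor
  · rintro ⟨hsum, hc, hR⟩
    exact ⟨hc, by omega, by omega, hR⟩
  · rintro ⟨hc, hcn, hsum, hR⟩
    exact ⟨by omega, hc, hR⟩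

open Classical in
noncomputable def compGF (P : List ℕ → Prop) (w : List ℕ → ℕ) : MvPowerSeries (Fin 3) ℚ :=
  fun m => #{L ∈ compLists (m 0) | P L ∧ L.length = m 1 ∧ w L = m 2}

section compGF

variable {P Q : List ℕ → Prop} {w v : List ℕ → ℕ}

lemma coeff_compGF [DecidablePred P] (m : Fin 3 →₀ ℕ) :
    coeff m (compGF P w) = #{L ∈ compLists (m 0) | P L ∧ L.length = m 1 ∧ w L = m 2} := by
  rw [coeff_apply, compGF]
  congr

lemma coeff_compGF_congr {m : Fin 3 →₀ ℕ} (hP : ∀ L ∈ compLists (m 0), P L ↔ Q L)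
    (hw : ∀ L ∈ compLists (m 0), P L → w L = v L) :
    coeff m (compGF P w) = coeff m (compGF Q v) := by
  classical
  rw [coeff_compGF, coeff_compGF]
  congr 2
  refine filter_congr fun L hL => ?_
  constructor
  · rintro ⟨hPL, hlen, hwL⟩
    exact ⟨(hP L hL).1 hPL, hlen, hw L hL hPL ▸ hwL⟩
  · rintro ⟨hQL, hlen, hvL⟩
    have hPL := (hP L hL).2 hQL
    exact ⟨hPL, hlen, (hw L hL hPL).symm ▸ hvL⟩

lemma compGF_congr (hP : ∀ n, ∀ L ∈ compLists n, P L ↔ Q L)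
    (hw : ∀ n, ∀ L ∈ compLists n, P L → w L = v L) : compGF P w = compGF Q v :=
  ext fun _ => coeff_compGF_congr (hP _) (hw _)

lemma compGF_and_add_compGF_and_not :
    compGF (fun L => P L ∧ Q L) w + compGF (fun L => P L ∧ ¬ Q L) w = compGF P w := by
  classical
  ext m
  simp only [map_add, coeff_compGF]
  rw [← Nat.cast_add, ← card_filter_add_card_filter_not
    (s := {L ∈ compLists (m 0) | P L ∧ L.length = m 1 ∧ w L = m 2}) Q, filter_filter, filter_filter]
  congr 1
  congr 1 <;> exact congrArg card (filter_congr fun L _ => by tauto)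

lemma compGF_exists_mem {ι : Type*} (s : Finset ι) (P : ι → List ℕ → Prop)
    (hP : ∀ i j L, P i L → P j L → i = j) :
    compGF (fun L => ∃ i ∈ s, P i L) w = ∑ i ∈ s, compGF (P i) w := by
  classical
  ext m
  simp only [map_sum, coeff_compGF]
  rw [← Nat.cast_sum, ← card_biUnion]
  · congr 2
    ext L
    simp only [mem_filter, mem_biUnion]
    constructor
    · rintro ⟨hL, ⟨i, hi, hPi⟩, hrest⟩
      exact ⟨i, hi, hL, hPi, hrest⟩
    · rintro ⟨i, hi, hL, hPi, hrest⟩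
      exact ⟨hL, ⟨i, hi, hPi⟩, hrest⟩
  · intro i _ j _ hij
    simp only [Function.onFun, disjoint_left, mem_filter]
    exact fun L hi hj => hij (hP i j L hi.2.1 hj.2.1)

lemma compGF_succ : compGF P (fun L => w L + 1) = X 2 * compGF P w := by
  classical
  ext m
  rw [coeff_X_mul_eq_ite, coeff_compGF]
  split_ifs with hm
  · simp only [coeff_compGF, Finsupp.tsub_apply, Finsupp.single_apply, Fin.reduceEq, if_false,
      if_true, Nat.sub_zero]
    congr 2
    exact filter_congr fun L _ => and_congr_right fun _ => and_congr_right fun _ => by omega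
  · rw [Nat.cast_eq_zero, card_eq_zero, filter_eq_empty_iff]
    rintro L - ⟨-, -, hw⟩
    omega

lemma compGF_cons {c : ℕ} (hc : 0 < c) :
    compGF (fun L => ∃ R, L = c :: R ∧ P R) w = X 0 ^ c * X 1 * compGF P (fun R => w (c :: R)) := by
  classical
  ext m
  rw [coeff_X_pow_mul_X_mul_eq_ite (by decide), coeff_compGF]
  split_ifs with hm
  · simp only [coeff_compGF, Finsupp.tsub_apply, Finsupp.add_apply, Finsupp.single_apply,
      Fin.reduceEq, if_false, if_true, Nat.sub_zero, add_zero, zero_add]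
    congr 1
    refine card_nbij' List.tail (List.cons c) ?_ ?_ ?_ ?_
    · rintro L hL
      simp only [mem_coe, mem_filter] at hL ⊢
      obtain ⟨hmem, ⟨R, rfl, hPR⟩, hlen, hw⟩ := hL
      refine ⟨(cons_mem_compLists.1 hmem).2.2, hPR, ?_, hw⟩
      simp only [List.length_cons] at hlen
      simp only [List.tail_cons]
      omega
    · rintro R hR
      simp only [mem_coe, mem_filter] at hR ⊢
      obtain ⟨hmem, hPR, hlen, hw⟩ := hR
      refine ⟨cons_mem_compLists.2 ⟨hc, hm.1, hmem⟩, ⟨R, rfl, hPR⟩, ?_, hw⟩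
      simp only [List.length_cons]
      omega
    · rintro L hL
      simp only [mem_coe, mem_filter] at hL
      obtain ⟨-, ⟨R, rfl, -⟩, -⟩ := hL
      rfl
    · intro R _
      rfl
  · rw [Nat.cast_eq_zero, card_eq_zero, filter_eq_empty_iff]
    rintro L hmem ⟨⟨R, rfl, -⟩, hlen, -⟩
    simp only [List.length_cons] at hlen
    exact hm ⟨(cons_mem_compLists.1 hmem).2.1, by omega⟩

lemma compGF_eq_nil : compGF (· = []) w = X 2 ^ w [] := by
  classical
  ext m
  rw [coeff_compGF, X_pow_eq, coeff_monomial]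
  split_ifs with hm
  · subst hm
    rw [Nat.cast_eq_one, card_eq_one]
    refine ⟨[], ext fun L => ?_⟩
    simp only [mem_filter, mem_singleton, mem_compLists]
    constructor
    · exact fun h => h.2.1
    · rintro rfl
      simp
  · rw [Nat.cast_eq_zero, card_eq_zero, filter_eq_empty_iff]
    rintro L hmem ⟨rfl, hlen, hw⟩
    have hsum : 0 = m 0 := (mem_compLists.1 hmem).1
    apply hm
    ext i
    fin_cases i <;> simp [← hsum, ← hlen, hw]

end compGF

lemma coeff_compGF_true_eq_add_sum (w : List ℕ → ℕ) (m : Fin 3 →₀ ℕ) :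
    coeff m (compGF (fun _ => True) w) = coeff m (X 2 ^ w []) +
      ∑ a ∈ Icc 1 (m 0), coeff m (X 0 ^ a * X 1 * compGF (fun _ => True) (fun R => w (a :: R))) := by
  rw [← compGF_and_add_compGF_and_not (Q := (· = [])), map_add]
  simp only [true_and]
  rw [compGF_eq_nil, coeff_compGF_congr (Q := fun L => ∃ a ∈ Icc 1 (m 0), ∃ R, L = a :: R ∧ True)
    (v := w), compGF_exists_mem, map_sum]
  · refine congrArg _ (sum_congr rfl fun a ha => ?_)
    rw [compGF_cons (mem_Icc.1 ha).1]
  · rintro a b L ⟨R, rfl, -⟩ ⟨R', hR', -⟩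
    exact (List.cons.inj hR').1
  · rintro (_ | ⟨a, R⟩) hL
    · simp
    · simp only [reduceCtorEq, not_false_eq_true, List.cons.injEq, and_true, true_iff]
      obtain ⟨ha, han, -⟩ := cons_mem_compLists.1 hL
      exact ⟨a, mem_Icc.2 ⟨ha, han⟩, R, rfl, rfl⟩
  · exact fun _ _ _ => rfl

noncomputable def GsvAfter (a : ℕ) : MvPowerSeries (Fin 3) ℚ :=
  compGF (fun _ => True) (fun L => svL (a :: L))

lemma Gsv_eq_compGF : Gsv = compGF (fun _ => True) svL := by
  classical
  ext m
  rw [coeff_compGF, compLists, filter_image, card_image_of_injective _ fun _ _ => Composition.ext]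
  simp [Gsv, coeff_apply]

lemma compGF_startsWithSymValley (a : ℕ) :
    compGF (fun L => StartsWithSymValley (a :: L)) svL =
      ∑ b ∈ Ico 1 a, X 0 ^ b * X 1 * (X 0 ^ a * X 1 * GsvAfter a) := by
  have hdecomp : ∀ n, ∀ L ∈ compLists n, StartsWithSymValley (a :: L) ↔
      ∃ b ∈ Ico 1 a, ∃ R, L = b :: R ∧ ∃ R', R = a :: R' ∧ True := by
    intro n L hL
    constructor
    · rintro ⟨_, b, R, hb, heq⟩
      simp only [List.cons.injEq] at heq
      obtain ⟨rfl, rfl, rfl, rfl⟩ := heq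
      exact ⟨b, mem_Ico.2 ⟨(cons_mem_compLists.1 hL).1, hb⟩, _, rfl, R, rfl, trivial⟩
    · rintro ⟨b, hb, _, rfl, R, rfl, -⟩
      exact ⟨a, b, R, (mem_Ico.1 hb).2, rfl⟩
  rw [compGF_congr hdecomp fun _ _ _ _ => rfl, compGF_exists_mem]
  · refine sum_congr rfl fun b hb => ?_
    obtain ⟨hb, hba⟩ := mem_Ico.1 hb
    rw [compGF_cons hb, compGF_cons (by omega), GsvAfter]
    congr 3
    funext R
    exact svL_cons_cons_of_lt R hba
  · rintro b c L ⟨R, rfl, -⟩ ⟨R', hR', -⟩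
    exact (List.cons.inj hR').1

lemma GsvAfter_mul_Bsv (a : ℕ) : GsvAfter a * Bsv a = Gsv := by
  set V := compGF (fun L => StartsWithSymValley (a :: L)) svL
  set N := compGF (fun L => ¬ StartsWithSymValley (a :: L)) svL
  have hG : Gsv = V + N := by
    rw [Gsv_eq_compGF, ← compGF_and_add_compGF_and_not (Q := fun L => StartsWithSymValley (a :: L))]
    simp only [true_and, V, N]
  have hF : GsvAfter a = X 2 * V + N := by
    rw [GsvAfter, ← compGF_and_add_compGF_and_not (Q := fun L => StartsWithSymValley (a :: L)),
      ← compGF_succ]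
    simp only [true_and, N]
    congr 1 <;> refine compGF_congr (fun _ _ _ => Iff.rfl) fun _ _ _ h => ?_
    · exact svL_cons_of_startsWithSymValley h
    · exact svL_cons_of_not_startsWithSymValley h
  have hV : V = X 1 ^ 2 * X 0 ^ (a + 1) * (∑ j ∈ range (a - 1), X 0 ^ j) * GsvAfter a := by
    refine (compGF_startsWithSymValley a).trans ?_
    rw [sum_Ico_eq_sum_range, mul_sum, sum_mul]
    exact sum_congr rfl fun j _ => by ring
  rw [Bsv]
  linear_combination hF - hG + (X 2 - 1) * hV

lemma GsvAfter_eq (a : ℕ) : GsvAfter a = Gsv * (Bsv a)⁻¹ := by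
  refine (MvPowerSeries.eq_mul_inv_iff_mul_eq ?_).2 (GsvAfter_mul_Bsv a)
  simp [Bsv]

lemma coeff_Gsv (m : Fin 3 →₀ ℕ) :
    coeff m Gsv = coeff m 1 + ∑ a ∈ Icc 1 (m 0), coeff m (Xv 0 ^ a * Xv 1 * GsvAfter a) := by
  rw [Gsv_eq_compGF, coeff_compGF_true_eq_add_sum, svL_nil, pow_zero]
  rfl

lemma coeff_mul_Ssv (f : MvPowerSeries (Fin 3) ℚ) (m : Fin 3 →₀ ℕ) :
    coeff m (f * Ssv) = ∑ a ∈ Icc 1 (m 0), coeff m (f * (Xv 0 ^ a * Xv 1 * (Bsv a)⁻¹)) :=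
  coeff_mul_eq_sum_of_coeff_eq_sum 0
    (fun a m hm => by rw [coeff_X_pow_mul_X_mul_eq_ite (by decide), if_neg (by omega)]) (fun _ => rfl) f m

/-- `G·(1 − Σ_{a≥1} x^a y B_a⁻¹) = 1`, i.e.
`G(x,y,p) = 1/(1 − Σ_{a≥1} x^a y/(1 − y²x^{a+1}(x^{a−1}−1)(p−1)/(x−1)))`. -/
theorem sv_generating_function : Gsv * (1 - Ssv) = 1 := by
  ext m
  rw [mul_sub, mul_one, map_sub, coeff_mul_Ssv, coeff_Gsv, add_sub_assoc, add_eq_left, sub_eq_zero]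
  exact sum_congr rfl fun a _ => by rw [GsvAfter_eq, mul_left_comm]
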